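/- Assume m ≤ 2 and that SDPR(δ) has an optimal solution. Then SDPR(δ) admits an optimal solution (Ṽ^1,...,Ṽ^q̂) with rank(Ṽ^q) ≤ 1 for all q = 1,...,q̂. -/

import Mathlib

/-!
Write a block of an optimal solution as a sum `X = B + u uᵀ + w wᵀ` of rank-one terms `v vᵀ`.
The directions `D = [u w] S [u w]ᵀ`, `S` symmetric `2 × 2`, form a three-dimensional space, so some
`S ≠ 0` leaves all `m ≤ 2` constraint values unchanged. As `X + t D ⪰ 0` for small `|t|`,
optimality makes the objective stationary along `D`; and at the `t` where `I + t S` becomes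
singular (while staying positive semidefinite), `X + t D = B + z zᵀ` has the same constraint and
objective values as `X`. So the summands can be merged one at a time until every block is a single
`z zᵀ`.
-/

open Matrix BigOperators

noncomputable section

/-- Trace inner product `⟨A,X⟩ = Σᵢⱼ Aᵢⱼ Xᵢⱼ`. -/
def mInner {N : ℕ} (A X : Matrix (Fin N) (Fin N) ℝ) : ℝ :=
  ∑ i, ∑ j, A i j * X i j

/-- The quadratic function `u ↦ (u,1)ᵀ B (u,1)` on `ℝⁿ`. -/
def quadF {n : ℕ} (B : Matrix (Fin (n + 1)) (Fin (n + 1)) ℝ) (u : Fin n → ℝ) : ℝ :=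
  Fin.snoc u 1 ⬝ᵥ (B *ᵥ Fin.snoc u 1)

/-- A relation on `ℝ` is standard if it is `≤`, `=`, or `≥`. -/
def IsStdRel (r : ℝ → ℝ → Prop) : Prop :=
  r = (· ≤ ·) ∨ r = (· = ·) ∨ r = (· ≥ ·)

section Homogeneous

variable (qhat m : ℕ) (nb : Fin qhat → ℕ)
  (C : (q : Fin qhat) → Fin (m + 1) → Matrix (Fin (nb q)) (Fin (nb q)) ℝ)
  (rel : Fin m → ℝ → ℝ → Prop)

/-- Feasibility of `v = (v¹,…,v^q̂)` for the separable homogeneous QCQP(δ). -/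
def homQCQPFeas (δ : Fin m → ℝ) (v : (q : Fin qhat) → Fin (nb q) → ℝ) : Prop :=
  ∀ k : Fin m, rel k (∑ q, v q ⬝ᵥ (C q k.succ *ᵥ v q)) (δ k)

/-- The optimal value `ζ(δ)` of the separable homogeneous QCQP. -/
def homQCQPVal (δ : Fin m → ℝ) : EReal :=
  sInf {y : EReal | ∃ v : (q : Fin qhat) → Fin (nb q) → ℝ,
    homQCQPFeas qhat m nb C rel δ v ∧
    y = ((∑ q, v q ⬝ᵥ (C q 0 *ᵥ v q) : ℝ) : EReal)}

/-- Feasibility of `V = (V¹,…,V^q̂)` for SDPR(δ). -/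
def homSDPRFeas (δ : Fin m → ℝ)
    (V : (q : Fin qhat) → Matrix (Fin (nb q)) (Fin (nb q)) ℝ) : Prop :=
  (∀ q, (V q).PosSemidef) ∧
    ∀ k : Fin m, rel k (∑ q, mInner (C q k.succ) (V q)) (δ k)

/-- The optimal value `η(δ)` of SDPR(δ). -/
def homSDPRVal (δ : Fin m → ℝ) : EReal :=
  sInf {y : EReal | ∃ V : (q : Fin qhat) → Matrix (Fin (nb q)) (Fin (nb q)) ℝ,
    homSDPRFeas qhat m nb C rel δ V ∧
    y = ((∑ q, mInner (C q 0) (V q) : ℝ) : EReal)}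

/-- `V` is an optimal solution of SDPR(δ): feasible and attaining the infimum. -/
def homSDPROpt (δ : Fin m → ℝ)
    (V : (q : Fin qhat) → Matrix (Fin (nb q)) (Fin (nb q)) ℝ) : Prop :=
  homSDPRFeas qhat m nb C rel δ V ∧
    ((∑ q, mInner (C q 0) (V q) : ℝ) : EReal) = homSDPRVal qhat m nb C rel δ

end Homogeneous

theorem LinearMap.exists_ne_zero_forall_apply_sum_smul_eq_zero {K E : Type*} [Field K]
    [AddCommGroup E] [Module K E] {m n : ℕ} (hmn : m < n) (φ : Fin m → E →ₗ[K] K)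
    (M : Fin n → E) : ∃ s : Fin n → K, s ≠ 0 ∧ ∀ k, φ k (∑ l, s l • M l) = 0 := by
  let f : (Fin n → K) →ₗ[K] Fin m → K :=
    LinearMap.pi fun k => (φ k).comp (Fintype.linearCombination K M)
  obtain ⟨s, hs, hs0⟩ := (Submodule.ne_bot_iff _).1 (f.ker_ne_bot_of_finrank_lt (by simpa))
  exact ⟨s, hs0, fun k => by
    simpa [f, Fintype.linearCombination_apply] using congrFun (LinearMap.mem_ker.1 hs) k⟩

theorem exists_sq_eq_mul_eq_sq_eq {a b c : ℝ} (ha : 0 ≤ a) (hc : 0 ≤ c) (h : b ^ 2 = a * c) :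
    ∃ α β : ℝ, α ^ 2 = a ∧ α * β = b ∧ β ^ 2 = c := by
  have habs : √a * √c = |b| := by rw [← Real.sqrt_mul ha, ← h, Real.sqrt_sq_eq_abs]
  rcases le_total 0 b with hb | hb
  · exact ⟨√a, √c, Real.sq_sqrt ha, by rw [habs, abs_of_nonneg hb], Real.sq_sqrt hc⟩
  · exact ⟨√a, -√c, Real.sq_sqrt ha, by rw [mul_neg, habs, abs_of_nonpos hb, neg_neg],
      by rw [neg_sq, Real.sq_sqrt hc]⟩

theorem exists_one_add_mul_eq_sq_of_ne_zero (s : Fin 3 → ℝ) (hs : s ≠ 0) :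
    ∃ t α β : ℝ, α ^ 2 = 1 + t * s 0 ∧ α * β = t * s 1 ∧ β ^ 2 = 1 + t * s 2 := by
  wlog h : 0 ≤ s 0 + s 2 generalizing s
  · obtain ⟨t, α, β, h0, h1, h2⟩ := this (-s) (neg_ne_zero.2 hs) (by simp; linarith)
    exact ⟨-t, α, β, by simpa using h0, by simpa using h1, by simpa using h2⟩
  set r := √((s 0 - s 2) ^ 2 + 4 * s 1 ^ 2)
  have hr : r ^ 2 = (s 0 - s 2) ^ 2 + 4 * s 1 ^ 2 := Real.sq_sqrt (by positivity)
  have hr_abs : |s 0 - s 2| ≤ r := Real.abs_le_sqrt (by nlinarith)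
  have hL : 0 < s 0 + s 2 + r := by
    refine lt_of_le_of_ne (by positivity) fun hL => hs ?_
    have h02 : s 0 + s 2 = 0 := by linarith [Real.sqrt_nonneg ((s 0 - s 2) ^ 2 + 4 * s 1 ^ 2)]
    have h1 : s 1 = 0 := by nlinarith
    funext l; fin_cases l <;> simp <;> nlinarith
  -- `-1/t` is the eigenvalue of largest modulus of `!![s 0, s 1; s 1, s 2]`
  have ht0 : 1 + -2 / (s 0 + s 2 + r) * s 0 = (r - (s 0 - s 2)) / (s 0 + s 2 + r) := by
    field_simp; ring
  have ht2 : 1 + -2 / (s 0 + s 2 + r) * s 2 = (r + (s 0 - s 2)) / (s 0 + s 2 + r) := by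
    field_simp; ring
  refine ⟨-2 / (s 0 + s 2 + r), exists_sq_eq_mul_eq_sq_eq ?_ ?_ ?_⟩
  · rw [ht0]; exact div_nonneg (by linarith [le_abs_self (s 0 - s 2)]) hL.le
  · rw [ht2]; exact div_nonneg (by linarith [neg_abs_le (s 0 - s 2)]) hL.le
  · rw [ht0, ht2]; field_simp; nlinarith

def mInnerLinear {N : ℕ} (A : Matrix (Fin N) (Fin N) ℝ) : Matrix (Fin N) (Fin N) ℝ →ₗ[ℝ] ℝ where
  toFun := mInner A
  map_add' X Y := by simp [mInner, mul_add, Finset.sum_add_distrib]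
  map_smul' c X := by simp [mInner, Finset.mul_sum, mul_left_comm]

@[simp]
theorem mInnerLinear_apply {N : ℕ} (A X : Matrix (Fin N) (Fin N) ℝ) :
    mInnerLinear A X = mInner A X := rfl

theorem mInner_add_smul {N : ℕ} (A X D : Matrix (Fin N) (Fin N) ℝ) (t : ℝ) :
    mInner A (X + t • D) = mInner A X + t * mInner A D := by
  simp [← mInnerLinear_apply]

section PairOuter

variable {n : Type*}

/-- The matrix `[u w] !![a, b; b, c] [u w]ᵀ`. -/
def pairOuter (u w : n → ℝ) (a b c : ℝ) : Matrix n n ℝ :=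
  a • vecMulVec u u + b • (vecMulVec u w + vecMulVec w u) + c • vecMulVec w w

theorem pairOuter_add_smul (u w : n → ℝ) (a b c a' b' c' t : ℝ) :
    pairOuter u w a b c + t • pairOuter u w a' b' c' =
      pairOuter u w (a + t * a') (b + t * b') (c + t * c') := by
  ext i j
  simp only [pairOuter, Matrix.add_apply, Matrix.smul_apply, vecMulVec_apply, smul_eq_mul]
  ring

theorem pairOuter_one_zero_one (u w : n → ℝ) :
    pairOuter u w 1 0 1 = vecMulVec u u + vecMulVec w w := by
  simp [pairOuter]

theorem pairOuter_sq (u w : n → ℝ) (α β : ℝ) :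
    pairOuter u w (α ^ 2) (α * β) (β ^ 2) = vecMulVec (α • u + β • w) (α • u + β • w) := by
  ext i j
  simp only [pairOuter, Matrix.add_apply, Matrix.smul_apply, vecMulVec_apply, smul_eq_mul,
    Pi.add_apply, Pi.smul_apply]
  ring

theorem dotProduct_pairOuter_mulVec [Fintype n] (u w x : n → ℝ) (a b c : ℝ) :
    x ⬝ᵥ (pairOuter u w a b c *ᵥ x) =
      a * (u ⬝ᵥ x) ^ 2 + 2 * b * (u ⬝ᵥ x) * (w ⬝ᵥ x) + c * (w ⬝ᵥ x) ^ 2 := by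
  simp only [pairOuter, add_mulVec, smul_mulVec, vecMulVec_mulVec, op_smul_eq_smul,
    dotProduct_add, dotProduct_smul, smul_eq_mul]
  simp only [dotProduct_comm x]
  ring

theorem pairOuter_posSemidef [Fintype n] (u w : n → ℝ) {a b c : ℝ} (ha : 0 ≤ a) (hc : 0 ≤ c)
    (hb : b ^ 2 ≤ a * c) : (pairOuter u w a b c).PosSemidef := by
  refine posSemidef_iff_dotProduct_mulVec.2 ⟨?_, fun x => ?_⟩
  · ext i j
    simp only [pairOuter, conjTranspose_apply, Matrix.add_apply, Matrix.smul_apply,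
      vecMulVec_apply, smul_eq_mul, star_trivial]
    ring
  · rw [star_trivial, dotProduct_pairOuter_mulVec]
    set p := u ⬝ᵥ x
    set q := w ⬝ᵥ x
    rcases ha.lt_or_eq with ha | rfl
    · nlinarith [sq_nonneg (a * p + b * q), mul_nonneg (sub_nonneg.2 hb) (sq_nonneg q)]
    · have hb0 : b = 0 := by nlinarith
      subst hb0
      nlinarith [sq_nonneg q]

end PairOuter

theorem eventually_posSemidef_add_pairOuter {n : Type*} [Fintype n] {B : Matrix n n ℝ}
    (hB : B.PosSemidef) (u w : n → ℝ) (s : Fin 3 → ℝ) :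
    ∀ᶠ t in nhds (0 : ℝ),
      (B + pairOuter u w (1 + t * s 0) (t * s 1) (1 + t * s 2)).PosSemidef := by
  have h0 : ∀ᶠ t in nhds (0 : ℝ), 0 < 1 + t * s 0 :=
    continuousAt_const.eventually_lt (by fun_prop) (by simp)
  have h2 : ∀ᶠ t in nhds (0 : ℝ), 0 < 1 + t * s 2 :=
    continuousAt_const.eventually_lt (by fun_prop) (by simp)
  have h1 : ∀ᶠ t in nhds (0 : ℝ), (t * s 1) ^ 2 < (1 + t * s 0) * (1 + t * s 2) :=
    ContinuousAt.eventually_lt (by fun_prop) (by fun_prop) (by simp)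
  filter_upwards [h0, h1, h2] with t h0 h1 h2
  exact hB.add (pairOuter_posSemidef u w h0.le h2.le h1.le)

theorem exists_add_vecMulVec_mInner_eq {N p : ℕ} (hp : p ≤ 2)
    (A : Fin (p + 1) → Matrix (Fin N) (Fin N) ℝ) {B : Matrix (Fin N) (Fin N) ℝ}
    (hB : B.PosSemidef) (u w : Fin N → ℝ)
    (hmin : ∀ Y : Matrix (Fin N) (Fin N) ℝ, Y.PosSemidef →
      (∀ k : Fin p, mInner (A k.succ) Y = mInner (A k.succ) (B + vecMulVec u u + vecMulVec w w)) →
      mInner (A 0) (B + vecMulVec u u + vecMulVec w w) ≤ mInner (A 0) Y) :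
    ∃ z : Fin N → ℝ, ∀ k, mInner (A k) (B + vecMulVec z z) =
      mInner (A k) (B + vecMulVec u u + vecMulVec w w) := by
  set X := B + vecMulVec u u + vecMulVec w w
  obtain ⟨s, hs, hsA⟩ := LinearMap.exists_ne_zero_forall_apply_sum_smul_eq_zero (by omega)
    (fun k : Fin p => mInnerLinear (A k.succ))
    ![vecMulVec u u, vecMulVec u w + vecMulVec w u, vecMulVec w w]
  set D := pairOuter u w (s 0) (s 1) (s 2)
  have hD : ∑ l, s l • ![vecMulVec u u, vecMulVec u w + vecMulVec w u, vecMulVec w w] l = D := by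
    simp [Fin.sum_univ_three, D, pairOuter]
  simp only [hD, mInnerLinear_apply] at hsA
  have hline : ∀ t : ℝ, X + t • D = B + pairOuter u w (1 + t * s 0) (t * s 1) (1 + t * s 2) := by
    intro t
    show B + vecMulVec u u + vecMulVec w w + t • D = _
    rw [add_assoc B, ← pairOuter_one_zero_one, add_assoc, pairOuter_add_smul, zero_add]
  have hA0 : mInner (A 0) D = 0 := by
    have hloc : IsLocalMin (fun t : ℝ => mInner (A 0) X + t * mInner (A 0) D) 0 := by
      filter_upwards [eventually_posSemidef_add_pairOuter hB u w s] with t ht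
      rw [← hline] at ht
      simpa [mInner_add_smul, hsA] using hmin _ ht
    refine hloc.hasDerivAt_eq_zero ?_
    simpa using ((hasDerivAt_id (0 : ℝ)).mul_const (mInner (A 0) D)).const_add (mInner (A 0) X)
  obtain ⟨t, α, β, h0, h1, h2⟩ := exists_one_add_mul_eq_sq_of_ne_zero s hs
  refine ⟨α • u + β • w, fun k => ?_⟩
  rw [← pairOuter_sq, h0, h1, h2, ← hline, mInner_add_smul]
  induction k using Fin.cases <;> simp [hA0, hsA]

section Update

variable {qhat m : ℕ} {nb : Fin qhat → ℕ}
  {C : (q : Fin qhat) → Fin (m + 1) → Matrix (Fin (nb q)) (Fin (nb q)) ℝ}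
  {rel : Fin m → ℝ → ℝ → Prop} {δ : Fin m → ℝ}

theorem sum_mInner_update (V : (q : Fin qhat) → Matrix (Fin (nb q)) (Fin (nb q)) ℝ)
    (q₀ : Fin qhat) (Y : Matrix (Fin (nb q₀)) (Fin (nb q₀)) ℝ) (k : Fin (m + 1)) :
    ∑ q, mInner (C q k) (Function.update V q₀ Y q) =
      ∑ q, mInner (C q k) (V q) + (mInner (C q₀ k) Y - mInner (C q₀ k) (V q₀)) := by
  simp_rw [Function.apply_update (fun q => mInner (C q k)),
    Finset.sum_update_of_mem (Finset.mem_univ q₀),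
    Finset.sum_eq_add_sum_sdiff_singleton_of_mem (Finset.mem_univ q₀)
      (fun q => mInner (C q k) (V q))]
  ring

theorem homSDPROpt.sum_mInner_le {V W : (q : Fin qhat) → Matrix (Fin (nb q)) (Fin (nb q)) ℝ}
    (hV : homSDPROpt qhat m nb C rel δ V) (hW : homSDPRFeas qhat m nb C rel δ W) :
    ∑ q, mInner (C q 0) (V q) ≤ ∑ q, mInner (C q 0) (W q) := by
  have h : homSDPRVal qhat m nb C rel δ ≤ ((∑ q, mInner (C q 0) (W q) : ℝ) : EReal) :=
    sInf_le ⟨W, hW, rfl⟩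
  rw [← hV.2] at h
  exact_mod_cast h

theorem homSDPROpt.update {V : (q : Fin qhat) → Matrix (Fin (nb q)) (Fin (nb q)) ℝ}
    (hV : homSDPROpt qhat m nb C rel δ V) {q₀ : Fin qhat}
    {Y : Matrix (Fin (nb q₀)) (Fin (nb q₀)) ℝ} (hY : Y.PosSemidef)
    (hYC : ∀ k, mInner (C q₀ k) Y = mInner (C q₀ k) (V q₀)) :
    homSDPROpt qhat m nb C rel δ (Function.update V q₀ Y) := by
  simp only [homSDPROpt, homSDPRFeas, sum_mInner_update, hYC, sub_self, add_zero]
  refine ⟨⟨fun q => ?_, hV.1.2⟩, hV.2⟩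
  rcases eq_or_ne q q₀ with rfl | hq
  · simpa using hY
  · simpa [hq] using hV.1.1 q

theorem homSDPROpt.mInner_le {V : (q : Fin qhat) → Matrix (Fin (nb q)) (Fin (nb q)) ℝ}
    (hV : homSDPROpt qhat m nb C rel δ V) {q₀ : Fin qhat}
    {Y : Matrix (Fin (nb q₀)) (Fin (nb q₀)) ℝ} (hY : Y.PosSemidef)
    (hYC : ∀ k : Fin m, mInner (C q₀ k.succ) Y = mInner (C q₀ k.succ) (V q₀)) :
    mInner (C q₀ 0) (V q₀) ≤ mInner (C q₀ 0) Y := by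
  have hW : homSDPRFeas qhat m nb C rel δ (Function.update V q₀ Y) := by
    refine ⟨fun q => ?_, fun k => ?_⟩
    · rcases eq_or_ne q q₀ with rfl | hq
      · simpa using hY
      · simpa [hq] using hV.1.1 q
    · simpa [sum_mInner_update, hYC] using hV.1.2 k
  have := hV.sum_mInner_le hW
  rw [sum_mInner_update] at this
  linarith

end Update

theorem homSDPROpt.exists_update_vecMulVec {qhat m : ℕ} (hm2 : m ≤ 2) {nb : Fin qhat → ℕ}
    {C : (q : Fin qhat) → Fin (m + 1) → Matrix (Fin (nb q)) (Fin (nb q)) ℝ}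
    {rel : Fin m → ℝ → ℝ → Prop} {δ : Fin m → ℝ}
    {V : (q : Fin qhat) → Matrix (Fin (nb q)) (Fin (nb q)) ℝ}
    (hV : homSDPROpt qhat m nb C rel δ V) (q₀ : Fin qhat) :
    ∃ z, homSDPROpt qhat m nb C rel δ (Function.update V q₀ (vecMulVec z z)) := by
  obtain ⟨r, v, hv⟩ := posSemidef_iff_eq_sum_vecMulVec.1 (hV.1.1 q₀)
  simp only [star_trivial] at hv
  induction r using Nat.twoStepInduction generalizing V with
  | zero =>
    rw [Finset.univ_eq_empty, Finset.sum_empty] at hv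
    exact ⟨0, by rwa [zero_vecMulVec, ← hv, Function.update_eq_self]⟩
  | one =>
    rw [Fin.sum_univ_one] at hv
    exact ⟨v 0, by rwa [← hv, Function.update_eq_self]⟩
  | more r _ ih =>
    set B := ∑ i : Fin r, vecMulVec (v i.succ.succ) (v i.succ.succ)
    have hB : B.PosSemidef :=
      posSemidef_iff_eq_sum_vecMulVec.2 ⟨r, fun i => v i.succ.succ, by simp [B]⟩
    have hVB : V q₀ = B + vecMulVec (v 0) (v 0) + vecMulVec (v 1) (v 1) := by
      rw [hv, Fin.sum_univ_succ, Fin.sum_univ_succ]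
      simp only [B, Fin.succ_zero_eq_one]
      abel
    obtain ⟨z, hz⟩ := exists_add_vecMulVec_mInner_eq hm2 (C q₀) hB (v 0) (v 1)
      fun Y hY hYC => hVB ▸ hV.mInner_le hY (hVB ▸ hYC)
    have hV' := hV.update (hB.add (posSemidef_vecMulVec_self_star z)) (hVB ▸ hz)
    obtain ⟨z', hz'⟩ := ih hV' (Fin.cons z fun i => v i.succ.succ) (by
      simp [Fin.sum_univ_succ, B, add_comm])
    exact ⟨z', by simpa using hz'⟩

theorem homogeneous_rank_one_optimal_of_m_le_two_general
    (qhat m : ℕ) (hm2 : m ≤ 2)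
    (nb : Fin qhat → ℕ)
    (C : (q : Fin qhat) → Fin (m + 1) → Matrix (Fin (nb q)) (Fin (nb q)) ℝ)
    (rel : Fin m → ℝ → ℝ → Prop)
    (δ : Fin m → ℝ)
    (hB : ∃ V : (q : Fin qhat) → Matrix (Fin (nb q)) (Fin (nb q)) ℝ,
      homSDPROpt qhat m nb C rel δ V) :
    ∃ Vt : (q : Fin qhat) → Matrix (Fin (nb q)) (Fin (nb q)) ℝ,
      homSDPROpt qhat m nb C rel δ Vt ∧ ∀ q, (Vt q).rank ≤ 1 := by
  obtain ⟨V, hV⟩ := hB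
  have hpartial : ∀ S : Finset (Fin qhat), ∃ W, homSDPROpt qhat m nb C rel δ W ∧
      ∀ q ∈ S, (W q).rank ≤ 1 := by
    intro S
    induction S using Finset.induction_on with
    | empty => exact ⟨V, hV, by simp⟩
    | insert q₀ S _ ih =>
      obtain ⟨W, hW, hWS⟩ := ih
      obtain ⟨z, hz⟩ := hW.exists_update_vecMulVec hm2 q₀
      refine ⟨_, hz, fun q hq => ?_⟩
      rcases eq_or_ne q q₀ with rfl | hne
      · simpa using rank_vecMulVec_le z z
      · simpa [hne] using hWS q (by simpa [hne] using hq)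
  obtain ⟨W, hW, hWrank⟩ := hpartial Finset.univ
  exact ⟨W, hW, fun q => hWrank q (Finset.mem_univ q)⟩

/-- **Corollary 4.7.** If `m ≤ 2` and SDPR(δ) has an optimal solution, then SDPR(δ)
admits an optimal solution all of whose blocks have rank at most one. -/
theorem homogeneous_rank_one_optimal_of_m_le_two
    (qhat m : ℕ) (hqhat : 0 < qhat) (hm : 0 < m) (hm2 : m ≤ 2)
    (nb : Fin qhat → ℕ)
    (C : (q : Fin qhat) → Fin (m + 1) → Matrix (Fin (nb q)) (Fin (nb q)) ℝ)
    (hCsymm : ∀ q k, (C q k).IsSymm)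
    (rel : Fin m → ℝ → ℝ → Prop) (hrel : ∀ k, IsStdRel (rel k))
    (δ : Fin m → ℝ)
    (hB : ∃ V : (q : Fin qhat) → Matrix (Fin (nb q)) (Fin (nb q)) ℝ,
      homSDPROpt qhat m nb C rel δ V) :
    ∃ Vt : (q : Fin qhat) → Matrix (Fin (nb q)) (Fin (nb q)) ℝ,
      homSDPROpt qhat m nb C rel δ Vt ∧ ∀ q, (Vt q).rank ≤ 1 :=
  homogeneous_rank_one_optimal_of_m_le_two_general qhat m hm2 nb C rel δ hB
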